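/- Let S be a Hausdorff topological semigroup containing a subsemigroup B isomorphic to the bicyclic monoid C(p,q), with B discrete in the subspace topology. If the square S × S is countably compact, then a contradiction arises; hence no such B exists. Specifically: any accumulation point (a,b) of the sequence ((q^n, p^n))_{n≥1} in S × S satisfies a·b = 1, and this leads to an element p^{m-n} ∈ O(a)·O(b) ∩ B = {1} with m > n, a contradiction. -/

import Mathlib

/-- The multiplication of the bicyclic monoid `C(p,q)` (generated by `p`, `q`
with `q * p = 1`), in the normal form `(a, b) ↔ p^a * q^b`. -/
def bicyclicMul (u v : ℕ × ℕ) : ℕ × ℕ :=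
  (u.1 + v.1 - min u.2 v.1, u.2 + v.2 - min u.2 v.1)

/-!
Let `(a, b)` be a cluster point of `(q^n, p^n)`. Since `q^n p^n = 1` for every `n` and
multiplication is continuous, `a b = 1`. As `1` is isolated in the discrete copy of `C(p,q)`,
it has a neighbourhood `U` meeting that copy only in `1`, and continuity of multiplication at
`(a, b)` yields `n < m` with `q^n p^m = p^(m-n) ∈ U`, i.e. `p^(m-n) = 1`, which is absurd.
-/

open Filter Topology

lemma bicyclicMul_q_pow_mul_p_pow {n m : ℕ} (h : n ≤ m) :
    bicyclicMul (0, n) (m, 0) = (m - n, 0) := by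
  simp only [bicyclicMul, Prod.mk.injEq]
  omega

lemma bicyclicMul_q_pow_mul_p_pow_self (n : ℕ) : bicyclicMul (0, n) (n, 0) = (0, 0) := by
  simpa using bicyclicMul_q_pow_mul_p_pow le_rfl

lemma MapClusterPt.eq_of_const {X α : Type*} [TopologicalSpace X] [T1Space X] {F : Filter α}
    [F.NeBot] {x y : X} (h : MapClusterPt x F fun _ ↦ y) : x = y := by
  rw [MapClusterPt, Filter.map_const] at h
  exact (specializes_iff_clusterPt.mpr h).eq.symm

section ClusterPt

variable {M : Type*} [Mul M] [TopologicalSpace M] [ContinuousMul M] {x y : ℕ → M} {a b : M}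

lemma MapClusterPt.mul_eq_of_forall_mul_eq [T1Space M]
    (h : MapClusterPt (a, b) atTop fun n ↦ (x n, y n)) {e : M} (he : ∀ n, x n * y n = e) :
    a * b = e := by
  have := h.continuousAt_comp (f := fun p : M × M ↦ p.1 * p.2) continuous_mul.continuousAt
  simp only [Function.comp_def, he] at this
  exact this.eq_of_const

lemma MapClusterPt.exists_lt_mul_mem
    (h : MapClusterPt (a, b) atTop fun n ↦ (x n, y n)) {U : Set M} (hU : U ∈ 𝓝 (a * b)) :
    ∃ n m, n < m ∧ x n * y m ∈ U := by
  obtain ⟨V, hV, W, hW, hVW⟩ := mem_nhds_prod_iff.mp (continuous_mul.continuousAt hU)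
  have hfreq := h.frequently (prod_mem_nhds hV hW)
  obtain ⟨n, -, hn⟩ := frequently_atTop.mp hfreq 0
  obtain ⟨m, hm, hm'⟩ := frequently_atTop.mp hfreq (n + 1)
  exact ⟨n, m, hm, hVW (Set.mk_mem_prod hn.1 hm'.2)⟩

end ClusterPt

/-- Let `S` be a Hausdorff topological semigroup containing a subsemigroup
`B = range φ` isomorphic to the bicyclic monoid `C(p,q)` (via the injective
homomorphism `φ`), with `B` discrete in the subspace topology.  If the square
`S × S` is countably compact, then a contradiction arises; hence no such `B`
exists. -/
theorem bicyclic_discrete_contradiction {S : Type*} [Semigroup S]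
    [TopologicalSpace S] [T2Space S] [ContinuousMul S]
    (φ : ℕ × ℕ → S) (hinj : Function.Injective φ)
    (hhom : ∀ u v : ℕ × ℕ, φ (bicyclicMul u v) = φ u * φ v)
    (hdisc : DiscreteTopology (Set.range φ))
    (hcc : ∀ u : ℕ → S × S, ∃ a : S × S, MapClusterPt a Filter.atTop u) :
    False := by
  obtain ⟨⟨a, b⟩, hab⟩ := hcc fun n ↦ (φ (0, n), φ (n, 0))
  have habe : a * b = φ (0, 0) :=
    hab.mul_eq_of_forall_mul_eq fun n ↦ by rw [← hhom, bicyclicMul_q_pow_mul_p_pow_self]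
  obtain ⟨U, hU, hUφ⟩ :=
    nhds_inter_eq_singleton_of_mem_discrete ⟨hdisc⟩ (Set.mem_range_self (0, 0))
  obtain ⟨n, m, hnm, hmem⟩ := hab.exists_lt_mul_mem (habe ▸ hU)
  rw [← hhom, bicyclicMul_q_pow_mul_p_pow hnm.le] at hmem
  have hφ : φ (m - n, 0) = φ (0, 0) := hUφ.subset ⟨hmem, Set.mem_range_self _⟩
  have hmn : m - n = 0 := congrArg Prod.fst (hinj hφ)
  omega
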